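/- On the duplex permutation network 𝒢_P on N ≥ 7 agents with all agents using Protocol AND and seed set S₀ = {j}, for all indices with 3 ≤ i ≤ N−3 and j ∈ {2, …, i−2} ∪ {i+2, …, N−2}, the probability that agent i is active at steady state of the multiplex LTM is ℙ_LTM(i) = (1/4)^{|i−j|}; moreover, this coincides with the corresponding steady-state activation probability of agent i on the duplex repeated path network 𝒢_R with all agents using Protocol AND and the same seed. -/

import Mathlib

open MeasureTheory

inductive Protocol
  | OR
  | AND
deriving DecidableEq

noncomputable def ltmStep {n m : ℕ} (w : Fin m → Fin n → Fin n → ℝ)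
    (u : Fin n → Protocol) (μ : Fin n → Fin m → ℝ)
    (A : Finset (Fin n)) : Finset (Fin n) :=
  A ∪ Finset.univ.filter fun i =>
    (u i = Protocol.OR ∧ ∃ k, μ i k < ∑ j ∈ A, w k i j) ∨
    (u i = Protocol.AND ∧ ∀ k, μ i k < ∑ j ∈ A, w k i j)

noncomputable def ltmSS {n m : ℕ} (w : Fin m → Fin n → Fin n → ℝ)
    (u : Fin n → Protocol) (S₀ : Finset (Fin n))
    (μ : Fin n → Fin m → ℝ) : Finset (Fin n) :=
  (ltmStep w u μ)^[n] S₀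

noncomputable def thMeasure (n m : ℕ) : Measure (Fin n → Fin m → ℝ) :=
  Measure.pi fun _ => Measure.pi fun _ => volume.restrict (Set.Icc (0:ℝ) 1)

noncomputable def pLTM {n m : ℕ} (w : Fin m → Fin n → Fin n → ℝ)
    (u : Fin n → Protocol) (S₀ : Finset (Fin n)) (i : Fin n) : ℝ :=
  (thMeasure n m {μ | i ∈ ltmSS w u S₀ μ}).toReal

def lemStep {n m : ℕ} (S₀ : Finset (Fin n)) (u : Fin n → Protocol)
    (σ : Fin n → Fin m → Fin n) (A : Finset (Fin n)) : Finset (Fin n) :=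
  S₀ ∪ A ∪ Finset.univ.filter fun i =>
    (u i = Protocol.OR ∧ ∃ k, σ i k ∈ A) ∨
    (u i = Protocol.AND ∧ ∀ k, σ i k ∈ A)

def UReachable {n m : ℕ} (S₀ : Finset (Fin n)) (u : Fin n → Protocol)
    (σ : Fin n → Fin m → Fin n) (i : Fin n) : Prop :=
  i ∈ (lemStep S₀ u σ)^[n] S₀

instance {n m : ℕ} (S₀ : Finset (Fin n)) (u : Fin n → Protocol)
    (σ : Fin n → Fin m → Fin n) (i : Fin n) : Decidable (UReachable S₀ u σ i) := by
  unfold UReachable; infer_instance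

noncomputable def rProb {n m : ℕ} (w : Fin m → Fin n → Fin n → ℝ)
    (S₀ : Finset (Fin n)) (u : Fin n → Protocol) (i : Fin n) : ℝ :=
  ∑ σ : Fin n → Fin m → Fin n,
    if UReachable S₀ u σ i then ∏ a : Fin n, ∏ k : Fin m, w k a (σ a k) else 0

noncomputable def casCen {n m : ℕ} (w : Fin m → Fin n → Fin n → ℝ)
    (u : Fin n → Protocol) (j : Fin n) : ℝ :=
  ∑ i : Fin n, pLTM w u {j} i

noncomputable def pathW (N : ℕ) (i j : Fin N) : ℝ :=
  if j.val = i.val + 1 ∨ i.val = j.val + 1 then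
    (if i.val = 0 ∨ i.val = N - 1 then 1 else 1/2)
  else 0

noncomputable def cycleW (N : ℕ) (i j : Fin N) : ℝ :=
  if (i.val + 1) % N = j.val ∨ (j.val + 1) % N = i.val then 1/2 else 0

noncomputable def permW2 (N : ℕ) (i j : Fin N) : ℝ :=
  if ((i.val + 1) % N = j.val ∨ (j.val + 1) % N = i.val) ∧
      ¬((i.val = N - 2 ∧ j.val = N - 1) ∨ (i.val = N - 1 ∧ j.val = N - 2)) then
    (if i.val = N - 2 ∨ i.val = N - 1 then 1 else 1/2)
  else 0

/-!
With every agent on AND, an agent `a` with `1 ≤ a ≤ N - 3` listens in each layer of either network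
with weight `1 / 2` to each of its two path neighbours. So activation creeps along the path from
`j` to `i` through the agents strictly between them and `i` itself, each of which fires once its
neighbour on `j`'s side is active, provided all of its thresholds are below `1 / 2`. Conversely, if
such an agent `a` has `μ a k ≥ 1 / 2`, it is a wall: in layer `k` it hears only that neighbour, and
in the path layer nobody beyond `a` hears anybody on `j`'s side of `a`. Up to the null set of
negative thresholds, `i` is therefore active iff these `|i - j|` agents have both thresholds below
`1 / 2`, which has probability `(1 / 2) ^ (2 |i - j|)` in both networks.
-/

open Finset

section AndDynamics

variable {n m : ℕ} {w : Fin m → Fin n → Fin n → ℝ} {μ : Fin n → Fin m → ℝ}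

theorem subset_ltmStep (u : Fin n → Protocol) (A : Finset (Fin n)) : A ⊆ ltmStep w u μ A :=
  subset_union_left

theorem monotone_iterate_ltmStep (u : Fin n → Protocol) (S₀ : Finset (Fin n)) :
    Monotone fun t => (ltmStep w u μ)^[t] S₀ :=
  fun _ _ hst => Function.monotone_iterate_of_id_le (subset_ltmStep u) hst S₀

theorem mem_ltmStep_AND_of_lt (hw : ∀ k a b, 0 ≤ w k a b) {A : Finset (Fin n)} {a p : Fin n}
    (hp : p ∈ A) (h : ∀ k, μ a k < w k a p) : a ∈ ltmStep w (fun _ => .AND) μ A :=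
  mem_union_right _ <| mem_filter.mpr ⟨mem_univ a, .inr ⟨rfl, fun k =>
    (h k).trans_le (single_le_sum (fun b _ => hw k a b) hp)⟩⟩

theorem mem_ltmSS_of_chain (hw : ∀ k a b, 0 ≤ w k a b) {S₀ : Finset (Fin n)} {d : ℕ}
    (f : Fin (d + 1) → Fin n) (hd : d ≤ n) (h0 : f 0 ∈ S₀)
    (hstep : ∀ s : Fin d, ∀ k, μ (f s.succ) k < w k (f s.succ) (f s.castSucc)) :
    f (Fin.last d) ∈ ltmSS w (fun _ => .AND) S₀ μ := by
  have hchain : ∀ s, f s ∈ (ltmStep w (fun _ => .AND) μ)^[s.val] S₀ := by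
    refine Fin.induction h0 fun s ih => ?_
    rw [Fin.val_succ, Function.iterate_succ_apply']
    exact mem_ltmStep_AND_of_lt hw ih (hstep s)
  exact monotone_iterate_ltmStep _ S₀ hd (hchain (Fin.last d))

theorem ltmStep_AND_subset (hw : ∀ k a b, 0 ≤ w k a b) {A C : Finset (Fin n)} (hAC : A ⊆ C)
    (hC : ∀ b ∉ C, ∃ k, ∑ c ∈ C, w k b c ≤ μ b k) : ltmStep w (fun _ => .AND) μ A ⊆ C := by
  intro b hb
  rcases mem_union.mp hb with hbA | hb
  · exact hAC hbA
  obtain ⟨-, ⟨hOR, -⟩ | ⟨-, hAND⟩⟩ := mem_filter.mp hb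
  · exact Protocol.noConfusion hOR
  by_contra hbC
  obtain ⟨k, hk⟩ := hC b hbC
  have hAC_sum : ∑ c ∈ A, w k b c ≤ ∑ c ∈ C, w k b c :=
    sum_le_sum_of_subset_of_nonneg hAC fun c _ _ => hw k b c
  exact (hAND k).not_ge (hAC_sum.trans hk)

theorem ltmSS_AND_subset (hw : ∀ k a b, 0 ≤ w k a b) {S₀ C : Finset (Fin n)} (hS₀ : S₀ ⊆ C)
    (hC : ∀ b ∉ C, ∃ k, ∑ c ∈ C, w k b c ≤ μ b k) : ltmSS w (fun _ => .AND) S₀ μ ⊆ C := by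
  suffices ∀ t, (ltmStep w (fun _ => .AND) μ)^[t] S₀ ⊆ C from this n
  intro t
  induction t with
  | zero => exact hS₀
  | succ t ih =>
    rw [Function.iterate_succ_apply']
    exact ltmStep_AND_subset hw ih hC

end AndDynamics

section PathWeights

variable {N : ℕ}

theorem pathW_nonneg (a b : Fin N) : 0 ≤ pathW N a b := by
  unfold pathW; split_ifs <;> norm_num

theorem permW2_nonneg (a b : Fin N) : 0 ≤ permW2 N a b := by
  unfold permW2; split_ifs <;> norm_num

theorem pathW_of_not_adj {a b : Fin N} (h : ¬(b.val = a.val + 1 ∨ a.val = b.val + 1)) :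
    pathW N a b = 0 :=
  if_neg h

theorem pathW_of_adj {a b : Fin N} (ha₀ : a.val ≠ 0) (ha₁ : a.val ≠ N - 1)
    (h : b.val = a.val + 1 ∨ a.val = b.val + 1) : pathW N a b = 1 / 2 := by
  rw [pathW, if_pos h, if_neg (by omega)]

/-- Rows `0` and `N - 2` differ: agent `0` also hears its cycle neighbour `N - 1`, and agent
`N - 2` lost the edge to `N - 1`. -/
theorem permW2_eq_pathW {a : Fin N} (h₁ : 1 ≤ a.val) (h₂ : a.val ≤ N - 3) :
    permW2 N a = pathW N a := by
  funext b
  have hb := b.isLt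
  have hsucc : (a.val + 1) % N = a.val + 1 := Nat.mod_eq_of_lt (by omega)
  have hpred : (b.val + 1) % N = a.val ↔ a.val = b.val + 1 := by
    rcases Nat.lt_or_ge (b.val + 1) N with h | h
    · rw [Nat.mod_eq_of_lt h]; omega
    · rw [show b.val + 1 = N by omega, Nat.mod_self]; omega
  by_cases hab : b.val = a.val + 1 ∨ a.val = b.val + 1
  · rw [pathW_of_adj (by omega) (by omega) hab, permW2, if_pos ⟨by omega, by omega⟩,
      if_neg (by omega)]
  · rw [pathW_of_not_adj hab, permW2, if_neg (by omega)]

theorem sum_Iio_pathW {a : Fin N} (ha₀ : a.val ≠ 0) (ha₁ : a.val ≠ N - 1) :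
    ∑ c ∈ Iio a, pathW N a c = 1 / 2 := by
  have hmem : (⟨a.val - 1, by omega⟩ : Fin N) ∈ Iio a :=
    mem_Iio.mpr (Fin.lt_def.mpr (by simp; omega))
  rw [sum_eq_single_of_mem _ hmem fun c hc hne => pathW_of_not_adj ?_,
    pathW_of_adj ha₀ ha₁ (.inr (by simp; omega))]
  have := Fin.lt_def.mp (mem_Iio.mp hc)
  have : c.val ≠ a.val - 1 := fun h => hne (Fin.ext (by simpa using h))
  omega

theorem sum_Ioi_pathW {a : Fin N} (ha₀ : a.val ≠ 0) (ha₁ : a.val ≠ N - 1) :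
    ∑ c ∈ Ioi a, pathW N a c = 1 / 2 := by
  have hmem : (⟨a.val + 1, by omega⟩ : Fin N) ∈ Ioi a := mem_Ioi.mpr (Fin.lt_def.mpr (by simp))
  rw [sum_eq_single_of_mem _ hmem fun c hc hne => pathW_of_not_adj ?_,
    pathW_of_adj ha₀ ha₁ (.inl rfl)]
  have := Fin.lt_def.mp (mem_Ioi.mp hc)
  have : c.val ≠ a.val + 1 := fun h => hne (Fin.ext (by simpa using h))
  omega

theorem sum_Iio_pathW_of_lt {a b : Fin N} (hab : a < b) : ∑ c ∈ Iio a, pathW N b c = 0 :=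
  sum_eq_zero fun c hc => pathW_of_not_adj <| by
    have := Fin.lt_def.mp (mem_Iio.mp hc); have := Fin.lt_def.mp hab; omega

theorem sum_Ioi_pathW_of_lt {a b : Fin N} (hba : b < a) : ∑ c ∈ Ioi a, pathW N b c = 0 :=
  sum_eq_zero fun c hc => pathW_of_not_adj <| by
    have := Fin.lt_def.mp (mem_Ioi.mp hc); have := Fin.lt_def.mp hba; omega

end PathWeights

section PathInterior

variable {N m : ℕ} {w : Fin m → Fin N → Fin N → ℝ} {k₀ : Fin m} {i j : Fin N}
  {μ : Fin N → Fin m → ℝ}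

theorem mem_ltmSS_iff_of_le (hw : ∀ k a b, 0 ≤ w k a b) (hk₀ : w k₀ = pathW N)
    (hint : ∀ k (a : Fin N), 1 ≤ a.val → a.val ≤ N - 3 → w k a = pathW N a)
    (hji : j ≤ i) (hi : i.val ≤ N - 3) (hμ : ∀ a k, 0 ≤ μ a k) :
    i ∈ ltmSS w (fun _ => .AND) {j} μ ↔ ∀ a ∈ Ioc j i, ∀ k, μ a k < 1 / 2 := by
  have hji' := Fin.le_def.mp hji
  constructor
  · intro hmem
    by_contra! ⟨a, ha, k, hk⟩
    obtain ⟨hja, hai⟩ := mem_Ioc.mp ha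
    have hja' := Fin.lt_def.mp hja
    have hai' := Fin.le_def.mp hai
    have hwall : ∀ b ∉ Iio a, ∃ k, ∑ c ∈ Iio a, w k b c ≤ μ b k := by
      intro b hb
      rcases (not_lt.mp (mt mem_Iio.mpr hb)).eq_or_lt with hab | hab
      · subst hab
        exact ⟨k, by rwa [hint k a (by omega) (by omega), sum_Iio_pathW (by omega) (by omega)]⟩
      · exact ⟨k₀, by rw [hk₀, sum_Iio_pathW_of_lt hab]; exact hμ b k₀⟩
    have hia := mem_Iio.mp (ltmSS_AND_subset hw (singleton_subset_iff.mpr (mem_Iio.mpr hja))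
      hwall hmem)
    exact absurd hai (not_le.mpr hia)
  · intro hlt
    let f : Fin (i.val - j.val + 1) → Fin N := fun s => ⟨j.val + s.val, by omega⟩
    have hstep : ∀ (s : Fin (i.val - j.val)) k,
        μ (f s.succ) k < w k (f s.succ) (f s.castSucc) := by
      intro s k
      have hs := s.isLt
      have hval : (f s.succ).val = j.val + s.val + 1 := rfl
      have hval' : (f s.castSucc).val = j.val + s.val := rfl
      rw [hint k _ (by omega) (by omega), pathW_of_adj (by omega) (by omega) (.inr (by omega))]
      exact hlt _ (by simp only [mem_Ioc, Fin.lt_def, Fin.le_def]; omega) k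
    convert mem_ltmSS_of_chain hw (S₀ := {j}) f (by omega) (by simp [f]) hstep
    exact Fin.ext (by simp [f]; omega)

theorem mem_ltmSS_iff_of_ge (hw : ∀ k a b, 0 ≤ w k a b) (hk₀ : w k₀ = pathW N)
    (hint : ∀ k (a : Fin N), 1 ≤ a.val → a.val ≤ N - 3 → w k a = pathW N a)
    (hij : i ≤ j) (hi : 1 ≤ i.val) (hj : j.val ≤ N - 2) (hμ : ∀ a k, 0 ≤ μ a k) :
    i ∈ ltmSS w (fun _ => .AND) {j} μ ↔ ∀ a ∈ Ico i j, ∀ k, μ a k < 1 / 2 := by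
  have hij' := Fin.le_def.mp hij
  constructor
  · intro hmem
    by_contra! ⟨a, ha, k, hk⟩
    obtain ⟨hia, haj⟩ := mem_Ico.mp ha
    have hia' := Fin.le_def.mp hia
    have haj' := Fin.lt_def.mp haj
    have hwall : ∀ b ∉ Ioi a, ∃ k, ∑ c ∈ Ioi a, w k b c ≤ μ b k := by
      intro b hb
      rcases (not_lt.mp (mt mem_Ioi.mpr hb)).eq_or_lt with hba | hba
      · subst hba
        exact ⟨k, by rwa [hint k b (by omega) (by omega), sum_Ioi_pathW (by omega) (by omega)]⟩
      · exact ⟨k₀, by rw [hk₀, sum_Ioi_pathW_of_lt hba]; exact hμ b k₀⟩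
    have hai := mem_Ioi.mp (ltmSS_AND_subset hw (singleton_subset_iff.mpr (mem_Ioi.mpr haj))
      hwall hmem)
    exact absurd hia (not_le.mpr hai)
  · intro hlt
    let f : Fin (j.val - i.val + 1) → Fin N := fun s => ⟨j.val - s.val, by omega⟩
    have hstep : ∀ (s : Fin (j.val - i.val)) k,
        μ (f s.succ) k < w k (f s.succ) (f s.castSucc) := by
      intro s k
      have hs := s.isLt
      have hval : (f s.succ).val = j.val - (s.val + 1) := rfl
      have hval' : (f s.castSucc).val = j.val - s.val := rfl
      rw [hint k _ (by omega) (by omega), pathW_of_adj (by omega) (by omega) (.inl (by omega))]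
      exact hlt _ (by simp only [mem_Ico, Fin.lt_def, Fin.le_def]; omega) k
    convert mem_ltmSS_of_chain hw (S₀ := {j}) f (by omega) (by simp [f]) hstep
    exact Fin.ext (by simp [f]; omega)

end PathInterior

section UniformThresholds

variable {n m : ℕ}

theorem ae_thMeasure_nonneg : ∀ᵐ μ ∂thMeasure n m, ∀ a k, 0 ≤ μ a k := by
  have hIcc : ∀ᵐ x ∂(volume.restrict (Set.Icc (0 : ℝ) 1)), 0 ≤ x :=
    (ae_restrict_mem measurableSet_Icc).mono fun _ hx => hx.1
  have hrow : ∀ k, ∀ᵐ ν ∂(Measure.pi fun _ : Fin m => volume.restrict (Set.Icc (0 : ℝ) 1)),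
      0 ≤ ν k := fun k => Measure.tendsto_eval_ae_ae.eventually hIcc
  exact ae_all_iff.mpr fun a => ae_all_iff.mpr fun k =>
    (Measure.tendsto_eval_ae_ae (i := a) (μ := fun _ : Fin n =>
      Measure.pi fun _ : Fin m => volume.restrict (Set.Icc (0 : ℝ) 1))).eventually (hrow k)

theorem pLTM_eq_of_iff {w : Fin m → Fin n → Fin n → ℝ} {u : Fin n → Protocol}
    {S₀ : Finset (Fin n)} {i : Fin n} {F : Set (Fin n → Fin m → ℝ)}
    (h : ∀ μ, (∀ a k, 0 ≤ μ a k) → (i ∈ ltmSS w u S₀ μ ↔ μ ∈ F)) :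
    pLTM w u S₀ i = (thMeasure n m F).toReal :=
  congrArg _ <| measure_congr <| Filter.eventuallyEq_set.mpr <| ae_thMeasure_nonneg.mono h

theorem thMeasure_forall_lt (T : Finset (Fin n)) {x : ℝ} (hx₀ : 0 ≤ x) (hx₁ : x ≤ 1) :
    (thMeasure n m {μ | ∀ a ∈ T, ∀ k, μ a k < x}).toReal = x ^ (m * #T) := by
  have hset : {μ : Fin n → Fin m → ℝ | ∀ a ∈ T, ∀ k, μ a k < x} =
      Set.univ.pi fun a => Set.univ.pi fun _ => if a ∈ T then Set.Iio x else Set.univ := by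
    ext μ
    simp only [Set.mem_ofPred_eq, Set.mem_pi, Set.mem_univ, true_implies]
    refine ⟨fun h a k => ?_, fun h a ha k => by simpa [ha] using h a k⟩
    split_ifs with ha
    exacts [h a ha k, trivial]
  have hIio : volume.restrict (Set.Icc (0 : ℝ) 1) (Set.Iio x) = ENNReal.ofReal x := by
    have hinter : Set.Iio x ∩ Set.Icc 0 1 = Set.Ico 0 x := by
      ext y
      simp only [Set.mem_inter_iff, Set.mem_Iio, Set.mem_Icc, Set.mem_Ico]
      exact ⟨fun ⟨hyx, hy₀, _⟩ => ⟨hy₀, hyx⟩, fun ⟨hy₀, hyx⟩ => ⟨hyx, hy₀, by linarith⟩⟩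
    rw [Measure.restrict_apply measurableSet_Iio, hinter, Real.volume_Ico, sub_zero]
  have huniv : volume.restrict (Set.Icc (0 : ℝ) 1) Set.univ = 1 := by
    simp
  rw [thMeasure, hset, Measure.pi_pi]
  simp only [Measure.pi_pi, apply_ite, hIio, huniv, prod_const, card_univ, Fintype.card_fin,
    ite_pow, one_pow]
  rw [prod_ite_mem, univ_inter, prod_const, ← pow_mul, ENNReal.toReal_pow,
    ENNReal.toReal_ofReal hx₀]

end UniformThresholds

theorem pLTM_AND_eq_of_pathW_interior {N m : ℕ} {w : Fin m → Fin N → Fin N → ℝ} {k₀ : Fin m}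
    (hw : ∀ k a b, 0 ≤ w k a b) (hk₀ : w k₀ = pathW N)
    (hint : ∀ k (a : Fin N), 1 ≤ a.val → a.val ≤ N - 3 → w k a = pathW N a)
    {i j : Fin N} (hi₁ : 1 ≤ i.val) (hi₂ : i.val ≤ N - 3) (hj : j.val ≤ N - 2) :
    pLTM w (fun _ => .AND) {j} i = (1 / 2) ^ (m * Nat.dist i.val j.val) := by
  rcases le_total j i with hji | hij
  · rw [pLTM_eq_of_iff (F := {μ | ∀ a ∈ Ioc j i, ∀ k, μ a k < 1 / 2})
      fun μ hμ => mem_ltmSS_iff_of_le hw hk₀ hint hji hi₂ hμ,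
      thMeasure_forall_lt _ (by norm_num) (by norm_num), Fin.card_Ioc,
      Nat.dist_eq_sub_of_le_right (Fin.le_def.mp hji)]
  · rw [pLTM_eq_of_iff (F := {μ | ∀ a ∈ Ico i j, ∀ k, μ a k < 1 / 2})
      fun μ hμ => mem_ltmSS_iff_of_ge hw hk₀ hint hij hi₁ hj hμ,
      thMeasure_forall_lt _ (by norm_num) (by norm_num), Fin.card_Ico,
      Nat.dist_eq_sub_of_le (Fin.le_def.mp hij)]

theorem permutation_AND_prob_general (N : ℕ) (i j : Fin N)
    (hi1 : 2 ≤ i.val) (hi2 : i.val ≤ N - 4)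
    (hj2 : j.val ≤ N - 3) :
    pLTM (fun k : Fin 2 => if k = 0 then pathW N else permW2 N)
        (fun _ => Protocol.AND) {j} i = (1/4 : ℝ) ^ (Nat.dist i.val j.val) ∧
    pLTM (fun k : Fin 2 => if k = 0 then pathW N else permW2 N)
        (fun _ => Protocol.AND) {j} i =
      pLTM (fun _ : Fin 2 => pathW N) (fun _ => Protocol.AND) {j} i := by
  have hquarter : (1 / 2 : ℝ) ^ (2 * Nat.dist i.val j.val) = (1 / 4) ^ Nat.dist i.val j.val := by
    rw [pow_mul]; norm_num
  have hP := pLTM_AND_eq_of_pathW_interior (k₀ := 0)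
    (w := fun k : Fin 2 => if k = 0 then pathW N else permW2 N)
    (fun k a b => by split_ifs; exacts [pathW_nonneg a b, permW2_nonneg a b]) rfl
    (fun k a h₁ h₂ => by split_ifs; exacts [rfl, permW2_eq_pathW h₁ h₂])
    (i := i) (j := j) (by omega) (by omega) (by omega)
  have hR := pLTM_AND_eq_of_pathW_interior (k₀ := 0) (w := fun _ : Fin 2 => pathW N)
    (fun _ a b => pathW_nonneg a b) rfl (fun _ _ _ _ => rfl)
    (i := i) (j := j) (by omega) (by omega) (by omega)
  exact ⟨hP.trans hquarter, hP.trans hR.symm⟩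

/-- on the duplex permutation network on `N ≥ 7` agents with all
agents using Protocol AND and seed `{j}`, under the same index conditions,
ℙ_LTM(i) = (1/4)^{|i−j|}; moreover this coincides with the steady-state activation
probability on the duplex repeated path network with all agents using AND. -/
theorem permutation_AND_prob (N : ℕ) (hN : 7 ≤ N) (i j : Fin N)
    (hi1 : 2 ≤ i.val) (hi2 : i.val ≤ N - 4)
    (hj1 : 1 ≤ j.val) (hj2 : j.val ≤ N - 3)
    (hd : 2 ≤ Nat.dist i.val j.val) :
    pLTM (fun k : Fin 2 => if k = 0 then pathW N else permW2 N)
        (fun _ => Protocol.AND) {j} i = (1/4 : ℝ) ^ (Nat.dist i.val j.val) ∧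
    pLTM (fun k : Fin 2 => if k = 0 then pathW N else permW2 N)
        (fun _ => Protocol.AND) {j} i =
      pLTM (fun _ : Fin 2 => pathW N) (fun _ => Protocol.AND) {j} i :=
  permutation_AND_prob_general N i j hi1 hi2 hj2
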